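/- Let G be a disconnected graph with exactly one nontrivial connected component G_1 and t > 0 trivial components. If diam(G_1) > 3, then h(G\bar{G}) ≤ t + 2, where h denotes the geodetic hull number. -/

import Mathlib

open SimpleGraph

/-- The geodetic closed interval `I[u,v]`: `u`, `v`, and all vertices lying on
some shortest `u`–`v` path. -/
def geoInterval {V : Type*} (G : SimpleGraph V) (u v : V) : Set V :=
  {w | w = u ∨ w = v ∨ (G.Reachable u v ∧ G.dist u w + G.dist w v = G.dist u v)}

/-- A set is geodetically convex if it is closed under intervals. -/
def IsGeoConvex {V : Type*} (G : SimpleGraph V) (S : Set V) : Prop :=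
  ∀ u ∈ S, ∀ v ∈ S, geoInterval G u v ⊆ S

/-- The geodetic convex hull: the smallest convex set containing `S`. -/
def geoHull {V : Type*} (G : SimpleGraph V) (S : Set V) : Set V :=
  ⋂₀ {T | IsGeoConvex G T ∧ S ⊆ T}

/-- `S` is a hull set if its convex hull is the whole vertex set. -/
def IsHullSet {V : Type*} (G : SimpleGraph V) (S : Set V) : Prop :=
  geoHull G S = Set.univ

/-- The geodetic hull number: minimum cardinality of a hull set. -/
noncomputable def hullNumber {V : Type*} (G : SimpleGraph V) : ℕ :=
  sInf {n | ∃ S : Set V, S.ncard = n ∧ IsHullSet G S}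

/-- A vertex is simplicial if its closed neighborhood induces a clique. -/
def IsSimplicial {V : Type*} (G : SimpleGraph V) (v : V) : Prop :=
  ∀ a ∈ G.neighborSet v, ∀ b ∈ G.neighborSet v, a ≠ b → G.Adj a b

/-- The complementary prism `G G̅`: disjoint union of `G` (left copies) and its
complement (right copies), plus a perfect matching between corresponding vertices. -/
def compPrism {V : Type*} (G : SimpleGraph V) : SimpleGraph (V ⊕ V) where
  Adj x y :=
    match x, y with
    | .inl u, .inl w => G.Adj u w
    | .inr u, .inr w => u ≠ w ∧ ¬ G.Adj u w
    | .inl u, .inr w => u = w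
    | .inr u, .inl w => u = w
  symm := by
    refine ⟨?_⟩
    rintro (u | u) (w | w) h
    · exact h.symm
    · exact h.symm
    · exact h.symm
    · exact ⟨h.1.symm, fun a => h.2 a.symm⟩
  loopless := by
    refine ⟨?_⟩
    rintro (u | u) h
    · exact G.irrefl h
    · exact h.1 rfl

/-! Fix a geodesic `v₀ v₁ v₂ v₃ v₄` of the nontrivial component and an isolated vertex `w`; the
left copies of the isolated vertices together with `v₀` and `v₃` form a hull set of `G Ḡ`.
The left copies of `v₀` and `v₃` are at distance 3 in `G Ḡ`, so their hull contains the left copy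
of every inner vertex of a `v₀`–`v₃` walk of length 3 in `G`, and the right copy of `w` (on
`w – w̄ – v̄₀ – v₀`). As `w̄` is adjacent to all other right copies, each left copy `x` in the hull
brings `x̄` along. A vertex nonadjacent in `G` to both ends of the edge `v₀v₁` (or `v₃v₄`) has its
right copy as a common neighbour of `v̄₀, v̄₁` (or `v̄₃, v̄₄`), which are at distance 2; the distances
along the geodesic force every other vertex onto a `v₀`–`v₃` walk of length 3. With all right
copies in the hull, the geodesics `x – y – ȳ` over the edges `xy` of `G` spread it over the
component. -/

section Geodesic

variable {W : Type*} {H : SimpleGraph W} {T : Set W} {a b z : W}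

lemma IsGeoConvex.mem_of_mem_support (hT : IsGeoConvex H T) (ha : a ∈ T) (hb : b ∈ T)
    (p : H.Walk a b) (hp : p.length = H.dist a b) (hz : z ∈ p.support) : z ∈ T := by
  classical
  refine hT a ha b hb (Or.inr (Or.inr ⟨p.reachable, ?_⟩))
  rw [← length_eq_dist_of_subwalk hp (p.isSubwalk_takeUntil hz),
    ← length_eq_dist_of_subwalk hp (p.isSubwalk_dropUntil hz), ← Walk.length_append,
    p.take_spec hz, hp]

lemma IsGeoConvex.mem_of_adj_of_adj (hT : IsGeoConvex H T) (ha : a ∈ T) (hb : b ∈ T)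
    (hne : a ≠ b) (hnadj : ¬ H.Adj a b) (haz : H.Adj a z) (hzb : H.Adj z b) : z ∈ T := by
  have hd : (H.dist a b : ℕ∞) = 2 := by
    rw [(haz.reachable.trans hzb.reachable).coe_dist_eq_edist]
    exact edist_eq_two_iff.2 ⟨hne, hnadj, z, haz, hzb.symm⟩
  exact hT.mem_of_mem_support ha hb (.cons haz (.cons hzb .nil))
    (by exact_mod_cast hd.symm) (by simp)

lemma isHullSet_of_forall_mem {S : Set W}
    (h : ∀ T, IsGeoConvex H T → S ⊆ T → ∀ x, x ∈ T) : IsHullSet H S :=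
  Set.eq_univ_of_forall fun x => Set.mem_sInter.2 fun T ⟨hT, hST⟩ => h T hT hST x

lemma hullNumber_le_ncard {S : Set W} (hS : IsHullSet H S) : hullNumber H ≤ S.ncard :=
  Nat.sInf_le ⟨S, rfl, hS⟩

end Geodesic

namespace SimpleGraph

variable {V : Type*} {G : SimpleGraph V}

lemma compl_adj_of_two_lt_edist {u v : V} (h : 2 < G.edist u v) : Gᶜ.Adj u v :=
  (compl_adj G u v).2 ⟨(two_lt_edist_iff.1 h).1, (two_lt_edist_iff.1 h).2.1⟩

lemma not_adj_of_two_lt_edist {x y z : V} (h : 2 < G.edist x y) (hxz : G.Adj x z) :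
    ¬ G.Adj z y := fun hzy =>
  (two_lt_edist_iff.1 h).2.2.subset ⟨hxz, hzy.symm⟩

lemma two_lt_edist_of_four_le_edist_of_adj {u v w : V} (h : 4 ≤ G.edist u w)
    (hvw : G.Adj v w) : 2 < G.edist u v := by
  have htri : G.edist u w ≤ G.edist u v + 1 :=
    G.edist_triangle.trans_eq (by rw [edist_eq_one_iff_adj.2 hvw])
  by_contra! hle
  have := h.trans (htri.trans (add_le_add_left hle 1))
  norm_num at this

lemma compl_adj_adj_or_adj_adj_of_two_lt_edist {v₀ v₁ v₃ v₄ : V} (h03 : 2 < G.edist v₀ v₃)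
    (h04 : 2 < G.edist v₀ v₄) (h14 : 2 < G.edist v₁ v₄) (z : V) :
    (Gᶜ.Adj v₀ z ∧ Gᶜ.Adj z v₁) ∨ (Gᶜ.Adj v₃ z ∧ Gᶜ.Adj z v₄) ∨
      z = v₀ ∨ z = v₁ ∨ z = v₃ ∨ (G.Adj v₁ z ∧ G.Adj z v₃) := by
  -- a neighbour of `v₀` is adjacent to neither `v₃` nor `v₄`, one of `v₁` is not adjacent to `v₄`
  have n03 := not_adj_of_two_lt_edist h03 (z := z)
  have n04 := not_adj_of_two_lt_edist h04 (z := z)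
  have n14 := not_adj_of_two_lt_edist h14 (z := z)
  have a04 := (two_lt_edist_iff.1 h04).2.1
  have a14 := (two_lt_edist_iff.1 h14).2.1
  simp only [compl_adj]
  grind [G.adj_symm]

lemma exists_adj_chain_of_four_le_dist {u v : V} (h : 4 ≤ G.dist u v) :
    ∃ v₁ v₂ v₃ v₄, G.Adj u v₁ ∧ G.Adj v₁ v₂ ∧ G.Adj v₂ v₃ ∧ G.Adj v₃ v₄ ∧
      G.edist u v₄ = 4 := by
  obtain ⟨p, hp⟩ :=
    (Reachable.of_dist_ne_zero (by omega : G.dist u v ≠ 0)).exists_walk_length_eq_dist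
  have hadj : ∀ i < 4, G.Adj (p.getVert i) (p.getVert (i + 1)) := fun i hi =>
    p.adj_getVert_succ (by omega)
  have h4 : (p.take 4).length = 4 := by rw [Walk.take_length]; omega
  refine ⟨p.getVert 1, p.getVert 2, p.getVert 3, p.getVert 4,
    by simpa using hadj 0 (by norm_num), hadj 1 (by norm_num), hadj 2 (by norm_num),
    hadj 3 (by norm_num), ?_⟩
  rw [← (p.take 4).reachable.coe_dist_eq_edist,
    ← length_eq_dist_of_subwalk hp (p.isSubwalk_take 4), h4]
  rfl

namespace ConnectedComponent

variable {C : G.ConnectedComponent}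

lemma dist_induce_supp_le {u v : V} (hu : u ∈ C.supp) (hv : v ∈ C.supp) :
    (G.induce C.supp).dist ⟨u, hu⟩ ⟨v, hv⟩ ≤ G.dist u v := by
  classical
  obtain ⟨p, hp⟩ := (C.reachable_of_mem_supp hu hv).exists_walk_length_eq_dist
  have hsupp : ∀ x ∈ p.support, x ∈ C.supp := fun x hx =>
    (C.mem_supp_iff x).2 (hu ▸ ConnectedComponent.sound (p.takeUntil x hx).reachable.symm)
  have hlen := congrArg Walk.length (p.map_induce hsupp)
  rw [Walk.length_map] at hlen
  exact (dist_le _).trans (hlen.trans hp).le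

lemma not_adj_of_notMem_supp (huniq : ∀ D : G.ConnectedComponent, D.supp.Nontrivial → D = C)
    {x : V} (hx : x ∉ C.supp) (y : V) : ¬ G.Adj x y := fun hxy =>
  hx (huniq _ ⟨x, rfl, y, connectedComponentMk_eq_of_adj hxy.symm, hxy.ne⟩)

lemma ncard_compl_supp (hC : C.supp.Nontrivial)
    (huniq : ∀ D : G.ConnectedComponent, D.supp.Nontrivial → D = C) :
    C.suppᶜ.ncard = Nat.card {D : G.ConnectedComponent // ¬ D.supp.Nontrivial} := by
  have htriv : ∀ x, x ∉ C.supp ↔ ¬ (G.connectedComponentMk x).supp.Nontrivial := fun x =>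
    ⟨fun hx hnt => hx (huniq _ hnt), fun hnt hx => hnt ((C.mem_supp_iff x).1 hx ▸ hC)⟩
  rw [← Nat.card_coe_set_eq]
  refine Nat.card_eq_of_bijective
    (fun x => ⟨G.connectedComponentMk x, (htriv x).1 x.2⟩) ⟨?_, ?_⟩
  · intro ⟨x, hx⟩ ⟨y, _⟩ hxy
    exact Subtype.ext
      (Set.not_nontrivial_iff.1 ((htriv x).1 hx) rfl (congrArg Subtype.val hxy).symm)
  · rintro ⟨D, hD⟩
    obtain ⟨x, rfl⟩ := D.exists_rep
    exact ⟨⟨x, (htriv x).2 hD⟩, rfl⟩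

end ConnectedComponent

end SimpleGraph

section ComplementaryPrism

variable {V : Type*} {G : SimpleGraph V}


@[simp] lemma compPrism_adj_inr_inr {x y : V} :
    (compPrism G).Adj (.inr x) (.inr y) ↔ Gᶜ.Adj x y := Iff.rfl

@[simp] lemma compPrism_adj_inl_inr {x y : V} :
    (compPrism G).Adj (.inl x) (.inr y) ↔ x = y := Iff.rfl

@[simp] lemma compPrism_adj_inr_inl {x y : V} :
    (compPrism G).Adj (.inr x) (.inl y) ↔ x = y := Iff.rfl

def compPrismInl (G : SimpleGraph V) : G →g compPrism G where
  toFun := Sum.inl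
  map_rel' h := h

def compPrismComplWalk {a b : V} (h : Gᶜ.Adj a b) : (compPrism G).Walk (.inl a) (.inl b) :=
  .cons (compPrism_adj_inl_inr.2 rfl)
    (.cons (compPrism_adj_inr_inr.2 h) (.cons (compPrism_adj_inr_inl.2 rfl) .nil))

lemma compPrism_dist_inl_inl {a b : V} (h : 2 < G.edist a b) :
    (compPrism G).dist (.inl a) (.inl b) = 3 := by
  obtain ⟨hne, hnadj, hcommon⟩ := two_lt_edist_iff.1 h
  let p := compPrismComplWalk (compl_adj_of_two_lt_edist h)
  have hgt : 2 < (compPrism G).edist (.inl a) (.inl b) := by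
    refine two_lt_edist_iff.2 ⟨by simpa, by simpa, Set.eq_empty_of_forall_notMem ?_⟩
    rintro (c | c) ⟨hac, hbc⟩
    · exact hcommon.subset ⟨hac, hbc⟩
    · exact hne (Eq.trans (hac : a = c) (Eq.symm (hbc : b = c)))
  rw [← p.reachable.coe_dist_eq_edist] at hgt
  have hle : (compPrism G).dist (.inl a) (.inl b) ≤ 3 := dist_le p
  have : 2 < (compPrism G).dist (.inl a) (.inl b) := by exact_mod_cast hgt
  omega

namespace IsGeoConvex

variable {T : Set (V ⊕ V)}

lemma inl_mem_of_mem_support (hT : IsGeoConvex (compPrism G) T) {a b z : V}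
    (ha : .inl a ∈ T) (hb : .inl b ∈ T) (hab : 2 < G.edist a b) (p : G.Walk a b)
    (hp : p.length = 3) (hz : z ∈ p.support) : Sum.inl z ∈ T :=
  hT.mem_of_mem_support ha hb (p.map (compPrismInl G))
    (by exact (Walk.length_map _ _).trans (hp.trans (compPrism_dist_inl_inl hab).symm))
    (by exact (Walk.support_map _ _) ▸ List.mem_map_of_mem hz)

lemma inr_mem_of_isolated (hT : IsGeoConvex (compPrism G) T) {w v : V}
    (hw : ∀ y, ¬ G.Adj w y) (hwv : w ≠ v) (hwT : .inl w ∈ T) (hvT : .inl v ∈ T) :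
    Sum.inr w ∈ T := by
  have hfar : 2 < G.edist w v :=
    two_lt_edist_iff.2 ⟨hwv, hw v, Set.eq_empty_of_forall_notMem fun c hc => hw c hc.1⟩
  exact hT.mem_of_mem_support hwT hvT (compPrismComplWalk (compl_adj_of_two_lt_edist hfar))
    (compPrism_dist_inl_inl hfar).symm (by simp [compPrismComplWalk])

lemma inr_mem_of_inl_mem (hT : IsGeoConvex (compPrism G) T) {w x : V}
    (hw : ∀ y, ¬ G.Adj w y) (hwT : .inr w ∈ T) (hxT : .inl x ∈ T) : Sum.inr x ∈ T := by
  rcases eq_or_ne x w with rfl | hxw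
  · exact hwT
  exact hT.mem_of_adj_of_adj hxT hwT Sum.inl_ne_inr (by simpa using hxw) (by simp)
    (by simpa [compl_adj] using ⟨hxw, fun h => hw x h.symm⟩)

lemma inl_mem_of_adj (hT : IsGeoConvex (compPrism G) T) {x y : V} (hxy : G.Adj x y)
    (hx : .inl x ∈ T) (hy : .inr y ∈ T) : Sum.inl y ∈ T :=
  hT.mem_of_adj_of_adj hx hy Sum.inl_ne_inr (by simpa using hxy.ne) (by simpa) (by simp)

lemma inr_mem_of_compl_adj (hT : IsGeoConvex (compPrism G) T) {x y z : V} (hxy : G.Adj x y)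
    (hx : .inr x ∈ T) (hy : .inr y ∈ T) (hxz : Gᶜ.Adj x z) (hzy : Gᶜ.Adj z y) :
    Sum.inr z ∈ T :=
  hT.mem_of_adj_of_adj hx hy (by simpa using hxy.ne) (by simp [hxy]) (by simpa) (by simpa)

lemma inl_mem_of_reachable (hT : IsGeoConvex (compPrism G) T) (hR : ∀ z, Sum.inr z ∈ T)
    {a z : V} (ha : .inl a ∈ T) (haz : G.Reachable a z) : Sum.inl z ∈ T := by
  obtain ⟨p⟩ := haz
  induction p with
  | nil => exact ha
  | cons hadj _ ih => exact ih (hT.inl_mem_of_adj hadj ha (hR _))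

end IsGeoConvex

theorem isHullSet_compPrism {A : Set V} {w v₀ v₁ v₂ v₃ v₄ : V} (hwA : w ∈ A)
    (hw : ∀ y, ¬ G.Adj w y) (h01 : G.Adj v₀ v₁) (h12 : G.Adj v₁ v₂) (h23 : G.Adj v₂ v₃)
    (h34 : G.Adj v₃ v₄) (h04 : 4 ≤ G.edist v₀ v₄) (hA : ∀ z ∉ A, G.Reachable v₀ z) :
    IsHullSet (compPrism G) (Sum.inl '' A ∪ {.inl v₀, .inl v₃}) := by
  have h03 : 2 < G.edist v₀ v₃ := two_lt_edist_of_four_le_edist_of_adj h04 h34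
  have h14 : 2 < G.edist v₁ v₄ := by
    rw [edist_comm] at h04 ⊢
    exact two_lt_edist_of_four_le_edist_of_adj h04 h01.symm
  have h04' : 2 < G.edist v₀ v₄ := lt_of_lt_of_le (by norm_num) h04
  refine isHullSet_of_forall_mem fun T hT hST => ?_
  have hAT : ∀ z ∈ A, Sum.inl z ∈ T := fun z hz => hST (.inl ⟨z, hz, rfl⟩)
  have h0T : Sum.inl v₀ ∈ T := hST (.inr (.inl rfl))
  have h3T : Sum.inl v₃ ∈ T := hST (.inr (.inr rfl))
  have hwT : Sum.inr w ∈ T :=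
    hT.inr_mem_of_isolated hw (fun h => hw v₁ (h ▸ h01)) (hAT w hwA) h0T
  have hrT : ∀ x, Sum.inl x ∈ T → Sum.inr x ∈ T := fun x => hT.inr_mem_of_inl_mem hw hwT
  have hlT : ∀ z, z = v₀ ∨ z = v₁ ∨ z = v₃ ∨ (G.Adj v₁ z ∧ G.Adj z v₃) → Sum.inl z ∈ T := by
    rintro z (rfl | rfl | rfl | ⟨h1z, hz3⟩)
    · exact h0T
    · exact hT.inl_mem_of_mem_support h0T h3T h03 (.cons h01 (.cons h12 (.cons h23 .nil)))
        rfl (by simp)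
    · exact h3T
    · exact hT.inl_mem_of_mem_support h0T h3T h03 (.cons h01 (.cons h1z (.cons hz3 .nil)))
        rfl (by simp)
  have h0T' := hrT _ h0T
  have h1T' := hrT _ (hlT v₁ (by simp))
  have h4T' : Sum.inr v₄ ∈ T := hT.inr_mem_of_compl_adj h01 h0T' h1T'
    (compl_adj_of_two_lt_edist h04') (compl_adj_of_two_lt_edist h14).symm
  have hR : ∀ z, Sum.inr z ∈ T := fun z => by
    rcases compl_adj_adj_or_adj_adj_of_two_lt_edist h03 h04' h14 z with
      ⟨h0z, hz1⟩ | ⟨h3z, hz4⟩ | hz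
    · exact hT.inr_mem_of_compl_adj h01 h0T' h1T' h0z hz1
    · exact hT.inr_mem_of_compl_adj h34 (hrT _ h3T) h4T' h3z hz4
    · exact hrT z (hlT z hz)
  rintro (z | z)
  · by_cases hz : z ∈ A
    · exact hAT z hz
    · exact hT.inl_mem_of_reachable hR h0T (hA z hz)
  · exact hR z

end ComplementaryPrism

theorem hullNumber_compPrism_one_nontrivial_ub_diam_gt_three_general {V : Type*}
    (G : SimpleGraph V) (t : ℕ)
    (C₁ : G.ConnectedComponent) (hC₁ : C₁.supp.Nontrivial)
    (huniq : ∀ C : G.ConnectedComponent, C.supp.Nontrivial → C = C₁)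
    (ht : t = Nat.card {C : G.ConnectedComponent // ¬ C.supp.Nontrivial})
    (ht0 : 0 < t)
    (hdiam : ∃ u v : C₁.supp, 3 < (G.induce C₁.supp).dist u v) :
    hullNumber (compPrism G) ≤ t + 2 := by
  obtain ⟨⟨u, hu⟩, ⟨v, hv⟩, huv⟩ := hdiam
  obtain ⟨v₁, v₂, v₃, v₄, h01, h12, h23, h34, h04⟩ :=
    exists_adj_chain_of_four_le_dist (huv.trans_le (C₁.dist_induce_supp_le hu hv))
  have hcard : C₁.suppᶜ.ncard = t := ht ▸ C₁.ncard_compl_supp hC₁ huniq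
  obtain ⟨w, hw⟩ := Set.nonempty_of_ncard_ne_zero (hcard ▸ ht0.ne')
  have hS := isHullSet_compPrism hw (C₁.not_adj_of_notMem_supp huniq hw) h01 h12 h23 h34
    h04.ge fun z hz => C₁.reachable_of_mem_supp hu (not_not.1 hz)
  calc hullNumber (compPrism G)
      ≤ (Sum.inl '' C₁.suppᶜ ∪ {.inl u, .inl v₃} : Set (V ⊕ V)).ncard := hullNumber_le_ncard hS
    _ ≤ (Sum.inl '' C₁.suppᶜ).ncard + ({.inl u, .inl v₃} : Set (V ⊕ V)).ncard :=
      Set.ncard_union_le _ _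
    _ ≤ t + 2 := by
      rw [Set.ncard_image_of_injective _ Sum.inl_injective, hcard]
      exact Nat.add_le_add_left ((Set.ncard_insert_le _ _).trans (by simp)) t

theorem hullNumber_compPrism_one_nontrivial_ub_diam_gt_three {V : Type*} [Fintype V]
    (G : SimpleGraph V) (t : ℕ) (hdisc : ¬ G.Connected)
    (C₁ : G.ConnectedComponent) (hC₁ : C₁.supp.Nontrivial)
    (huniq : ∀ C : G.ConnectedComponent, C.supp.Nontrivial → C = C₁)
    (ht : t = Nat.card {C : G.ConnectedComponent // ¬ C.supp.Nontrivial})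
    (ht0 : 0 < t)
    (hdiam : ∃ u v : C₁.supp, 3 < (G.induce C₁.supp).dist u v) :
    hullNumber (compPrism G) ≤ t + 2 :=
  hullNumber_compPrism_one_nontrivial_ub_diam_gt_three_general G t C₁ hC₁ huniq ht ht0 hdiam
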